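/- Let 0 < a < b and β ∈ ℝ. There is a constant C > 0, depending only on a, b, β, such that for every smooth U : ℝ → ℝ supported in [a,b] with |U(y)| ≤ 1 and |U'(y)| ≤ 1 for all y, every ξ ∈ ℝ, and every τ ∈ ℝ with τ ≠ 0, one has |U†(ξ, β + iτ)| ≤ C |τ|^{−1/2}. -/

import Mathlib

open MeasureTheory Set

/-- `e(x) = exp(2πix)`. -/
noncomputable def e2pi (x : ℝ) : ℂ := Complex.exp (2 * Real.pi * Complex.I * x)

/-- The Mellin-type transform `U†(ξ, s) = ∫₀^∞ U(y) e(−ξy) y^{s−1} dy`. -/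
noncomputable def Udag (U : ℝ → ℝ) (ξ : ℝ) (s : ℂ) : ℂ :=
  ∫ y in Ioi (0 : ℝ), (U y : ℂ) * e2pi (-(ξ * y)) * (y : ℂ) ^ (s - 1)


lemma alg_aux (G G₁ t p q ap : ℝ) (hap : ap ≠ 0) (hq : q ≠ 0) (h2 : p ^ 2 = ap ^ 2) :
    (G₁ * ap + G * (t / q)) / p ^ 2 = G₁ / ap + G * (t * (q * p ^ 2)⁻¹) := by
  rw [h2]; field_simp

lemma alg_aux2 (τ p q : ℝ) : τ * (q * p ^ 2)⁻¹ = -(-τ / q) / p ^ 2 := by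
  rw [neg_div q τ, neg_neg, div_div, div_eq_mul_inv]

lemma nonstat (ξ τ μ c d : ℝ) (hc : 0 < c) (hcd : c ≤ d)
    (g g' : ℝ → ℂ) (G G₁ : ℝ)
    (hg : ∀ y ∈ Set.Icc c d, HasDerivAt g (g' y) y)
    (hg'c : ContinuousOn g' (Set.Icc c d))
    (hG : ∀ y ∈ Set.Icc c d, ‖g y‖ ≤ G)
    (hG₁ : ∀ y ∈ Set.Icc c d, ‖g' y‖ ≤ G₁)
    (hμ : 0 < μ)
    (hψ : ∀ y ∈ Set.Icc c d, μ ≤ |τ / y - 2 * Real.pi * ξ|) :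
    ‖∫ y in c..d, g y * Complex.exp (Complex.I *
        ((τ * Real.log y - 2 * Real.pi * ξ * y : ℝ) : ℂ))‖
      ≤ (4 * G + (d - c) * G₁) / μ := by
  set ψ : ℝ → ℝ := fun y => τ / y - 2 * Real.pi * ξ with hψdef
  set φ : ℝ → ℝ := fun y => τ * Real.log y - 2 * Real.pi * ξ * y with hφdef
  set E : ℝ → ℂ := fun y => Complex.exp (Complex.I * (φ y : ℂ)) with hEdef
  have hpos : ∀ y ∈ Set.Icc c d, 0 < y := fun y hy => lt_of_lt_of_le hc hy.1
  have hψne : ∀ y ∈ Set.Icc c d, ψ y ≠ 0 := by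
    intro y hy
    intro h
    have h2 : μ ≤ |ψ y| := hψ y hy
    rw [h] at h2
    simp at h2
    linarith
  -- derivative facts
  have hφd : ∀ y ∈ Set.Icc c d, HasDerivAt φ (ψ y) y := by
    intro y hy
    have h1 : HasDerivAt (fun y : ℝ => τ * Real.log y) (τ * y⁻¹) y :=
      (Real.hasDerivAt_log (hpos y hy).ne').const_mul τ
    have h2 : HasDerivAt (fun y : ℝ => 2 * Real.pi * ξ * y) (2 * Real.pi * ξ) y := by
      simpa using (hasDerivAt_id y).const_mul (2 * Real.pi * ξ)
    exact (h1.sub h2).congr_deriv (by simp [hψdef, div_eq_mul_inv])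
  have hψd : ∀ y ∈ Set.Icc c d, HasDerivAt ψ (-τ / y ^ 2) y := by
    intro y hy
    have h1 : HasDerivAt (fun y : ℝ => τ / y) (τ * (-(y ^ 2)⁻¹)) y := by
      simpa [div_eq_mul_inv] using (hasDerivAt_inv (hpos y hy).ne').const_mul τ
    have := h1.sub_const (2 * Real.pi * ξ)
    exact this.congr_deriv (by ring)
  have hEd : ∀ y ∈ Set.Icc c d, HasDerivAt E (Complex.I * (ψ y : ℂ) * E y) y := by
    intro y hy
    have h1 : HasDerivAt (fun y : ℝ => ((φ y : ℝ) : ℂ)) ((ψ y : ℂ)) y :=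
      (hφd y hy).ofReal_comp
    have h2 := (h1.const_mul Complex.I).cexp
    convert h2 using 1
    ring
  have hE1 : ∀ y : ℝ, ‖E y‖ = 1 := by
    intro y
    simp [hEdef, Complex.norm_exp]
  set w : ℝ → ℂ := fun y => g y / (Complex.I * (ψ y : ℂ)) with hwdef
  set w' : ℝ → ℂ := fun y =>
    (g' y * (Complex.I * (ψ y : ℂ)) - g y * (Complex.I * ((-τ / y ^ 2 : ℝ) : ℂ))) /
      (Complex.I * (ψ y : ℂ)) ^ 2 with hw'def
  have hIψne : ∀ y ∈ Set.Icc c d, Complex.I * (ψ y : ℂ) ≠ 0 := fun y hy =>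
    mul_ne_zero Complex.I_ne_zero (Complex.ofReal_ne_zero.2 (hψne y hy))
  have hwd : ∀ y ∈ Set.Icc c d, HasDerivAt w (w' y) y := fun y hy =>
    (hg y hy).div (((hψd y hy).ofReal_comp).const_mul Complex.I) (hIψne y hy)
  have hHd : ∀ y ∈ Set.Icc c d,
      HasDerivAt (fun y => w y * E y) (g y * E y + w' y * E y) y := by
    intro y hy
    have h := (hwd y hy).mul (hEd y hy)
    have hww : w y * (Complex.I * (ψ y : ℂ) * E y) = g y * E y := by
      rw [hwdef]
      have h1 : Complex.I ≠ 0 := Complex.I_ne_zero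
      have h2 : ((ψ y : ℂ)) ≠ 0 := Complex.ofReal_ne_zero.2 (hψne y hy)
      field_simp
    rw [← hww]
    exact h.congr_deriv (by ring)
  -- continuity facts
  have hgc : ContinuousOn g (Set.Icc c d) := fun y hy =>
    (hg y hy).continuousAt.continuousWithinAt
  have hψcont : ContinuousOn ψ (Set.Icc c d) := by
    intro y hy
    exact ((continuousAt_const.div continuousAt_id (hpos y hy).ne').sub
      continuousAt_const).continuousWithinAt
  have hEc : ContinuousOn E (Set.Icc c d) := by
    intro y hy
    have hφc : ContinuousAt φ y :=
      ((Real.continuousAt_log (hpos y hy).ne').const_mul τ).sub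
        (continuousAt_id.const_mul (2 * Real.pi * ξ))
    have h1 : ContinuousAt (fun y : ℝ => Complex.I * ((φ y : ℝ) : ℂ)) y :=
      (Complex.continuous_ofReal.continuousAt.comp hφc).const_mul Complex.I
    exact (Complex.continuous_exp.continuousAt.comp h1).continuousWithinAt
  have hy2cont : ContinuousOn (fun y : ℝ => y ^ 2) (Set.Icc c d) := (continuousOn_id.pow 2)
  have hy2ne : ∀ y ∈ Set.Icc c d, (y : ℝ) ^ 2 ≠ 0 := fun y hy => pow_ne_zero 2 (hpos y hy).ne'
  have hw'c : ContinuousOn w' (Set.Icc c d) := by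
    apply ContinuousOn.div
    · apply ContinuousOn.sub
      · exact hg'c.mul (continuousOn_const.mul (Complex.continuous_ofReal.comp_continuousOn hψcont))
      · exact hgc.mul (continuousOn_const.mul (Complex.continuous_ofReal.comp_continuousOn
          (continuousOn_const.div hy2cont hy2ne)))
    · exact (continuousOn_const.mul (Complex.continuous_ofReal.comp_continuousOn hψcont)).pow 2
    · exact fun y hy => pow_ne_zero 2 (hIψne y hy)
  have huIcc : Set.uIcc c d = Set.Icc c d := uIcc_of_le hcd
  have hi1 : IntervalIntegrable (fun y => g y * E y) volume c d := by
    apply ContinuousOn.intervalIntegrable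
    rw [huIcc]; exact hgc.mul hEc
  have hi2 : IntervalIntegrable (fun y => w' y * E y) volume c d := by
    apply ContinuousOn.intervalIntegrable
    rw [huIcc]; exact hw'c.mul hEc
  have hFTC : ∫ y in c..d, (g y * E y + w' y * E y) = w d * E d - w c * E c := by
    apply intervalIntegral.integral_eq_sub_of_hasDerivAt
    · intro y hy
      exact hHd y (huIcc ▸ hy)
    · exact hi1.add hi2
  have hsplit : ∫ y in c..d, g y * E y
      = (w d * E d - w c * E c) - ∫ y in c..d, w' y * E y := by
    rw [← hFTC, intervalIntegral.integral_add hi1 hi2]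
    ring
  have hGnn : 0 ≤ G := le_trans (norm_nonneg _) (hG c ⟨le_refl c, hcd⟩)
  have hG1nn : 0 ≤ G₁ := le_trans (norm_nonneg _) (hG₁ c ⟨le_refl c, hcd⟩)
  have hnIr : ∀ r : ℝ, ‖Complex.I * (r : ℂ)‖ = |r| := by
    intro r
    rw [norm_mul, Complex.norm_I, one_mul, Complex.norm_real, Real.norm_eq_abs]
  have hnIψ : ∀ y : ℝ, ‖Complex.I * (ψ y : ℂ)‖ = |ψ y| := fun y => hnIr (ψ y)
  have hwbd : ∀ y ∈ Set.Icc c d, ‖w y‖ ≤ G / μ := by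
    intro y hy
    rw [hwdef]
    simp only
    rw [norm_div, hnIψ]
    exact div_le_div₀ hGnn (hG y hy) hμ (hψ y hy)
  have hw'bd : ∀ y ∈ Set.Icc c d,
      ‖w' y‖ ≤ G₁ / μ + G * (|τ| * (y ^ 2 * ψ y ^ 2)⁻¹) := by
    intro y hy
    have hy0 := hpos y hy
    have hψa : (0:ℝ) < |ψ y| := lt_of_lt_of_le hμ (hψ y hy)
    have hψ2 : (0:ℝ) < ψ y ^ 2 := by rw [← _root_.sq_abs]; positivity
    rw [hw'def]
    simp only
    rw [norm_div, norm_pow, hnIψ, _root_.sq_abs]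
    have hnum : ‖g' y * (Complex.I * (ψ y : ℂ)) - g y * (Complex.I * ((-τ / y ^ 2 : ℝ) : ℂ))‖
        ≤ G₁ * |ψ y| + G * (|τ| / y ^ 2) := by
      refine le_trans (norm_sub_le _ _) ?_
      have e1 : ‖g' y * (Complex.I * (ψ y : ℂ))‖ = ‖g' y‖ * |ψ y| := by
        rw [norm_mul, hnIψ]
      have e2 : ‖g y * (Complex.I * ((-τ / y ^ 2 : ℝ) : ℂ))‖ = ‖g y‖ * (|τ| / y ^ 2) := by
        rw [norm_mul, hnIr]
        congr 1
        rw [abs_div, abs_neg, _root_.abs_of_nonneg (sq_nonneg y)]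
      rw [e1, e2]
      have := hψa.le
      have h2 : (0:ℝ) ≤ |τ| / y ^ 2 := by positivity
      exact add_le_add (mul_le_mul_of_nonneg_right (hG₁ y hy) hψa.le)
        (mul_le_mul_of_nonneg_right (hG y hy) h2)
    calc ‖g' y * (Complex.I * (ψ y : ℂ)) - g y * (Complex.I * ((-τ / y ^ 2 : ℝ) : ℂ))‖ / ψ y ^ 2
        ≤ (G₁ * |ψ y| + G * (|τ| / y ^ 2)) / ψ y ^ 2 := by
          gcongr
      _ = G₁ / |ψ y| + G * (|τ| * (y ^ 2 * ψ y ^ 2)⁻¹) :=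
          alg_aux G G₁ |τ| (ψ y) (y ^ 2) |ψ y| hψa.ne' (hy2ne y hy)
            (_root_.sq_abs (ψ y)).symm
      _ ≤ G₁ / μ + G * (|τ| * (y ^ 2 * ψ y ^ 2)⁻¹) := by
          have h3 := div_le_div_of_nonneg_left hG1nn hμ (hψ y hy)
          linarith
  have hinvcont : ContinuousOn (fun y => (y ^ 2 * ψ y ^ 2)⁻¹) (Set.Icc c d) := by
    apply ContinuousOn.inv₀
    · exact hy2cont.mul (hψcont.pow 2)
    · exact fun y hy => mul_ne_zero (hy2ne y hy) (pow_ne_zero 2 (hψne y hy))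
  set A : ℝ := ∫ y in c..d, (y ^ 2 * ψ y ^ 2)⁻¹ with hAdef
  have hAnn : 0 ≤ A := by
    rw [hAdef]
    apply intervalIntegral.integral_nonneg hcd
    intro y hy
    positivity
  have hτA : τ * A = (ψ d)⁻¹ - (ψ c)⁻¹ := by
    rw [hAdef, ← intervalIntegral.integral_const_mul]
    apply intervalIntegral.integral_eq_sub_of_hasDerivAt
    · intro y hy
      rw [huIcc] at hy
      have h := (hψd y hy).inv (hψne y hy)
      exact h.congr_deriv (alg_aux2 τ (ψ y) (y ^ 2)).symm
    · apply ContinuousOn.intervalIntegrable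
      rw [huIcc]
      exact continuousOn_const.mul hinvcont
  have h2μ : |τ| * A ≤ 2 / μ := by
    have h1 : |τ| * A = |(ψ d)⁻¹ - (ψ c)⁻¹| := by
      rw [← hτA, abs_mul, _root_.abs_of_nonneg hAnn]
    rw [h1]
    have hd' : |(ψ d)⁻¹| ≤ μ⁻¹ := by
      rw [abs_inv]
      exact inv_anti₀ hμ (hψ d ⟨hcd, le_refl d⟩)
    have hc' : |(ψ c)⁻¹| ≤ μ⁻¹ := by
      rw [abs_inv]
      exact inv_anti₀ hμ (hψ c ⟨le_refl c, hcd⟩)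
    calc |(ψ d)⁻¹ - (ψ c)⁻¹| ≤ |(ψ d)⁻¹| + |(ψ c)⁻¹| := abs_sub _ _
      _ ≤ μ⁻¹ + μ⁻¹ := add_le_add hd' hc'
      _ = 2 / μ := by rw [div_eq_mul_inv]; ring
  have hbw' : ‖∫ y in c..d, w' y * E y‖ ≤ (d - c) * (G₁ / μ) + G * (|τ| * A) := by
    refine le_trans (intervalIntegral.norm_integral_le_integral_norm hcd) ?_
    have hmono : ∫ y in c..d, ‖w' y * E y‖
        ≤ ∫ y in c..d, (G₁ / μ + G * (|τ| * (y ^ 2 * ψ y ^ 2)⁻¹)) := by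
      apply intervalIntegral.integral_mono_on hcd
      · apply ContinuousOn.intervalIntegrable
        rw [huIcc]; exact (hw'c.mul hEc).norm
      · apply ContinuousOn.intervalIntegrable
        rw [huIcc]
        exact continuousOn_const.add (continuousOn_const.mul (continuousOn_const.mul hinvcont))
      · intro y hy
        rw [norm_mul, hE1, mul_one]
        exact hw'bd y hy
    refine hmono.trans ?_
    have hiG : IntervalIntegrable (fun y : ℝ => G * (|τ| * (y ^ 2 * ψ y ^ 2)⁻¹)) volume c d := by
      apply ContinuousOn.intervalIntegrable
      rw [huIcc]
      exact continuousOn_const.mul (continuousOn_const.mul hinvcont)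
    rw [intervalIntegral.integral_add intervalIntegrable_const hiG,
      intervalIntegral.integral_const, intervalIntegral.integral_const_mul,
      intervalIntegral.integral_const_mul, smul_eq_mul, ← hAdef]
  have hEgoal : (∫ y in c..d, g y * Complex.exp (Complex.I *
      ((τ * Real.log y - 2 * Real.pi * ξ * y : ℝ) : ℂ))) = ∫ y in c..d, g y * E y := rfl
  rw [hEgoal, hsplit]
  have hwd' : ‖w d * E d‖ ≤ G / μ := by rw [norm_mul, hE1, mul_one]; exact hwbd d ⟨hcd, le_refl d⟩
  have hwc' : ‖w c * E c‖ ≤ G / μ := by rw [norm_mul, hE1, mul_one]; exact hwbd c ⟨le_refl c, hcd⟩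
  have hGA : G * (|τ| * A) ≤ G * (2 / μ) := mul_le_mul_of_nonneg_left h2μ hGnn
  calc ‖w d * E d - w c * E c - ∫ y in c..d, w' y * E y‖
      ≤ ‖w d * E d - w c * E c‖ + ‖∫ y in c..d, w' y * E y‖ := norm_sub_le _ _
    _ ≤ (‖w d * E d‖ + ‖w c * E c‖) + ((d - c) * (G₁ / μ) + G * (|τ| * A)) :=
        add_le_add (norm_sub_le _ _) hbw'
    _ ≤ (G / μ + G / μ) + ((d - c) * (G₁ / μ) + G * (2 / μ)) :=
        add_le_add (add_le_add hwd' hwc') (add_le_add (le_refl _) hGA)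
    _ = (4 * G + (d - c) * G₁) / μ := by
        field_simp
        ring

lemma split_lemma (ξ τ μ a b : ℝ) (ha : 0 < a) (hab : a ≤ b) (hμ : 0 < μ) (hτ : τ ≠ 0) :
    ∃ c d : ℝ, a ≤ c ∧ c ≤ d ∧ d ≤ b ∧ d - c ≤ 2 * μ * b ^ 2 / |τ| ∧
      (c = a ∨ ∀ y ∈ Set.Icc a c, μ ≤ |τ / y - 2 * Real.pi * ξ|) ∧
      (d = b ∨ ∀ y ∈ Set.Icc d b, μ ≤ |τ / y - 2 * Real.pi * ξ|) := by
  have hτa : 0 < |τ| := abs_pos.2 hτ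
  have hb : 0 < b := lt_of_lt_of_le ha hab
  set ψ : ℝ → ℝ := fun y => τ / y - 2 * Real.pi * ξ with hψdef
  have hψc : ∀ y : ℝ, 0 < y → ContinuousAt ψ y := fun y hy =>
    (continuousAt_const.div continuousAt_id hy.ne').sub continuousAt_const
  set S : Set ℝ := {y | y ∈ Set.Icc a b ∧ |ψ y| < μ} with hSdef
  have hSsub : S ⊆ Set.Icc a b := fun y hy => hy.1
  rcases S.eq_empty_or_nonempty with hS | hS
  · refine ⟨a, a, le_refl a, le_refl a, hab, by rw [sub_self]; positivity, Or.inl rfl, Or.inr ?_⟩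
    intro y hy
    by_contra h
    push_neg at h
    have hmem : y ∈ S := ⟨hy, h⟩
    rw [hS] at hmem
    exact hmem
  · have hbdd : BddBelow S := ⟨a, fun y hy => hy.1.1⟩
    have hbdda : BddAbove S := ⟨b, fun y hy => hy.1.2⟩
    set c := sInf S with hcdef
    set d := sSup S with hddef
    have hac : a ≤ c := le_csInf hS fun y hy => hy.1.1
    have hdb : d ≤ b := csSup_le hS fun y hy => hy.1.2
    have hcd : c ≤ d := by
      obtain ⟨x, hx⟩ := hS
      exact le_trans (csInf_le hbdd hx) (le_csSup hbdda hx)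
    -- closed superset of S
    have hTclosed : IsClosed {y | y ∈ Set.Icc a b ∧ |ψ y| ≤ μ} := by
      have : {y | y ∈ Set.Icc a b ∧ |ψ y| ≤ μ} = Set.Icc a b ∩ (fun y => |ψ y|) ⁻¹' Set.Iic μ := by
        ext y; simp [Set.mem_inter_iff]
      rw [this]
      apply ContinuousOn.preimage_isClosed_of_isClosed _ isClosed_Icc isClosed_Iic
      intro y hy
      exact ((hψc y (lt_of_lt_of_le ha hy.1)).continuousWithinAt).abs
    have hclosure : closure S ⊆ {y | y ∈ Set.Icc a b ∧ |ψ y| ≤ μ} :=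
      closure_minimal (fun y hy => ⟨hy.1, hy.2.le⟩) hTclosed
    have hcmem := hclosure (csInf_mem_closure hS hbdd)
    have hdmem := hclosure (csSup_mem_closure hS hbdda)
    have hcpos : 0 < c := lt_of_lt_of_le ha hac
    -- length bound via MVT
    have hlen : d - c ≤ 2 * μ * b ^ 2 / |τ| := by
      rcases eq_or_lt_of_le hcd with h | h
      · rw [← h]; simp; positivity
      · have hψd : ∀ y ∈ Set.Ioo c d, HasDerivAt ψ (-τ / y ^ 2) y := by
          intro y hy
          have hy0 : 0 < y := lt_trans hcpos hy.1
          have h1 : HasDerivAt (fun y : ℝ => τ / y) (τ * (-(y ^ 2)⁻¹)) y := by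
            simpa [div_eq_mul_inv] using (hasDerivAt_inv hy0.ne').const_mul τ
          have := h1.sub_const (2 * Real.pi * ξ)
          exact this.congr_deriv (by ring)
        have hψcont : ContinuousOn ψ (Set.Icc c d) := fun y hy =>
          (hψc y (lt_of_lt_of_le hcpos hy.1)).continuousWithinAt
        obtain ⟨z, hz, hzslope⟩ := exists_hasDerivAt_eq_slope ψ (fun y => -τ / y ^ 2) h hψcont hψd
        have hz0 : 0 < z := lt_trans hcpos hz.1
        have hzb : z ≤ b := le_trans hz.2.le hdb
        have hz2 : z ^ 2 ≤ b ^ 2 := by nlinarith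
        have habs : |ψ d - ψ c| ≤ 2 * μ := by
          calc |ψ d - ψ c| ≤ |ψ d| + |ψ c| := abs_sub _ _
            _ ≤ μ + μ := add_le_add hdmem.2 hcmem.2
            _ = 2 * μ := by ring
        have hslope : |τ| / b ^ 2 ≤ |(ψ d - ψ c) / (d - c)| := by
          rw [← hzslope]
          rw [abs_div, abs_neg, _root_.abs_of_nonneg (sq_nonneg z)]
          apply div_le_div_of_nonneg_left hτa.le (by positivity) hz2
        rw [abs_div, _root_.abs_of_nonneg (by linarith : (0:ℝ) ≤ d - c)] at hslope
        have hdc : 0 < d - c := by linarith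
        rw [div_le_div_iff₀ (by positivity) hdc] at hslope
        rw [le_div_iff₀ hτa]
        nlinarith
    refine ⟨c, d, hac, hcd, hdb, hlen, ?_, ?_⟩
    · rcases eq_or_lt_of_le hac with h | h
      · exact Or.inl h.symm
      · refine Or.inr fun y hy => ?_
        have hIco : ∀ x ∈ Set.Ico a c, μ ≤ |ψ x| := by
          intro x hx
          by_contra hcon
          push_neg at hcon
          have hxS : x ∈ S := ⟨⟨hx.1, le_trans hx.2.le (le_trans hcd hdb)⟩, hcon⟩
          exact absurd (csInf_le hbdd hxS) (not_le.2 hx.2)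
        rcases lt_or_eq_of_le hy.2 with h2 | h2
        · exact hIco y ⟨hy.1, h2⟩
        · rw [h2]
          have hne : (nhdsWithin c (Set.Ico a c)).NeBot := by
            rw [← mem_closure_iff_nhdsWithin_neBot, closure_Ico (ne_of_lt h)]
            exact ⟨le_of_lt h, le_refl c⟩
          have htend : Filter.Tendsto (fun x => |ψ x|) (nhdsWithin c (Set.Ico a c)) (nhds |ψ c|) :=
            ((hψc c hcpos).abs).continuousWithinAt
          exact ge_of_tendsto htend (Filter.eventually_iff_exists_mem.2
            ⟨Set.Ico a c, self_mem_nhdsWithin, fun x hx => hIco x hx⟩)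
    · rcases eq_or_lt_of_le hdb with h | h
      · exact Or.inl h
      · refine Or.inr fun y hy => ?_
        have hIoc : ∀ x ∈ Set.Ioc d b, μ ≤ |ψ x| := by
          intro x hx
          by_contra hcon
          push_neg at hcon
          have hxS : x ∈ S := ⟨⟨le_trans (le_trans hac hcd) hx.1.le, hx.2⟩, hcon⟩
          exact absurd (le_csSup hbdda hxS) (not_le.2 hx.1)
        rcases lt_or_eq_of_le hy.1 with h2 | h2
        · exact hIoc y ⟨h2, hy.2⟩
        · rw [← h2]
          have hne : (nhdsWithin d (Set.Ioc d b)).NeBot := by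
            rw [← mem_closure_iff_nhdsWithin_neBot, closure_Ioc (ne_of_lt h)]
            exact ⟨le_refl d, le_of_lt h⟩
          have htend : Filter.Tendsto (fun x => |ψ x|) (nhdsWithin d (Set.Ioc d b)) (nhds |ψ d|) :=
            ((hψc d (lt_of_lt_of_le hcpos hcd)).abs).continuousWithinAt
          exact ge_of_tendsto htend (Filter.eventually_iff_exists_mem.2
            ⟨Set.Ioc d b, self_mem_nhdsWithin, fun x hx => hIoc x hx⟩)

/-- The second derivative test bound (A.7) of the paper for the transform `U†`. -/
theorem Udag_second_derivative_bound (a b β : ℝ) (ha : 0 < a) (hab : a < b) :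
    ∃ C : ℝ, 0 < C ∧
      ∀ U : ℝ → ℝ, ContDiff ℝ (⊤ : ℕ∞) U → Function.support U ⊆ Icc a b →
        (∀ y : ℝ, |U y| ≤ 1) → (∀ y : ℝ, |deriv U y| ≤ 1) →
        ∀ ξ τ : ℝ, τ ≠ 0 →
          ‖Udag U ξ ((β : ℂ) + τ * Complex.I)‖ ≤ C * |τ| ^ (-(1 : ℝ) / 2) := by
  have hb : 0 < b := lt_trans ha hab
  set G : ℝ := max (a ^ (β - 1)) (b ^ (β - 1)) with hGdef
  set G2 : ℝ := max (a ^ (β - 1 - 1)) (b ^ (β - 1 - 1)) with hG2def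
  set G₁ : ℝ := G + |β - 1| * G2 with hG1def
  set K : ℝ := 4 * G + (b - a) * G₁ with hKdef
  have hGpos : 0 < G := lt_of_lt_of_le (Real.rpow_pos_of_pos ha _) (le_max_left _ _)
  have hG2nn : 0 ≤ G2 := le_trans (Real.rpow_pos_of_pos ha _).le (le_max_left _ _)
  have hG1nn : 0 ≤ G₁ := add_nonneg hGpos.le (mul_nonneg (abs_nonneg _) hG2nn)
  have hKpos : 0 < K := by
    have h1 : 0 ≤ (b - a) * G₁ := mul_nonneg (by linarith) hG1nn
    have h2 : 0 < 4 * G := by linarith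
    rw [hKdef]; linarith
  have hCpos : 0 < 2 * b * K + 2 * b * G := by
    have := mul_pos (mul_pos (by norm_num : (0:ℝ) < 2) hb) hKpos
    have := mul_pos (mul_pos (by norm_num : (0:ℝ) < 2) hb) hGpos
    linarith
  refine ⟨2 * b * K + 2 * b * G, hCpos, ?_⟩
  intro U hU hsupp hU0 hU1 ξ τ hτ
  have hτa : 0 < |τ| := abs_pos.2 hτ
  set t : ℝ := |τ| ^ ((1:ℝ)/2) with htdef
  have ht : 0 < t := Real.rpow_pos_of_pos hτa _
  have htt : t * t = |τ| := by
    rw [htdef, ← Real.rpow_add hτa]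
    norm_num
  set μ : ℝ := t / b with hμdef
  have hμ : 0 < μ := by positivity
  set g : ℝ → ℂ := fun y => ((U y * y ^ (β - 1) : ℝ) : ℂ) with hgdef
  set g' : ℝ → ℂ := fun y =>
    ((deriv U y * y ^ (β - 1) + U y * ((β - 1) * y ^ (β - 1 - 1)) : ℝ) : ℂ) with hg'def
  have hUdiff : Differentiable ℝ U := hU.differentiable (by simp)
  have hgd : ∀ y : ℝ, 0 < y → HasDerivAt g (g' y) y := by
    intro y hy
    have h1 : HasDerivAt U (deriv U y) y := (hUdiff y).hasDerivAt
    have h2 : HasDerivAt (fun x : ℝ => x ^ (β - 1)) ((β - 1) * y ^ (β - 1 - 1)) y :=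
      Real.hasDerivAt_rpow_const (Or.inl hy.ne')
    exact (h1.mul h2).ofReal_comp
  have hrpow_le : ∀ p : ℝ, ∀ y ∈ Set.Icc a b, y ^ p ≤ max (a ^ p) (b ^ p) := by
    intro p y hy
    rcases le_or_gt 0 p with hp | hp
    · exact le_trans (Real.rpow_le_rpow (le_trans ha.le hy.1) hy.2 hp) (le_max_right _ _)
    · exact le_trans (Real.rpow_le_rpow_of_nonpos ha hy.1 hp.le) (le_max_left _ _)
  have hgbd : ∀ y ∈ Set.Icc a b, ‖g y‖ ≤ G := by
    intro y hy
    have hy0 : 0 < y := lt_of_lt_of_le ha hy.1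
    rw [hgdef]
    simp only [Complex.norm_real, Real.norm_eq_abs]
    rw [abs_mul, _root_.abs_of_nonneg (Real.rpow_nonneg hy0.le _)]
    calc |U y| * y ^ (β - 1) ≤ 1 * y ^ (β - 1) :=
          mul_le_mul_of_nonneg_right (hU0 y) (Real.rpow_nonneg hy0.le _)
      _ = y ^ (β - 1) := one_mul _
      _ ≤ G := hrpow_le (β - 1) y hy
  have hg'bd : ∀ y ∈ Set.Icc a b, ‖g' y‖ ≤ G₁ := by
    intro y hy
    have hy0 : 0 < y := lt_of_lt_of_le ha hy.1
    rw [hg'def]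
    simp only [Complex.norm_real, Real.norm_eq_abs]
    have h1 : |deriv U y * y ^ (β - 1)| ≤ G := by
      rw [abs_mul, _root_.abs_of_nonneg (Real.rpow_nonneg hy0.le _)]
      calc |deriv U y| * y ^ (β - 1) ≤ 1 * y ^ (β - 1) :=
            mul_le_mul_of_nonneg_right (hU1 y) (Real.rpow_nonneg hy0.le _)
        _ = y ^ (β - 1) := one_mul _
        _ ≤ G := hrpow_le (β - 1) y hy
    have h2 : |U y * ((β - 1) * y ^ (β - 1 - 1))| ≤ |β - 1| * G2 := by
      rw [abs_mul, abs_mul, _root_.abs_of_nonneg (Real.rpow_nonneg hy0.le _)]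
      calc |U y| * (|β - 1| * y ^ (β - 1 - 1)) ≤ 1 * (|β - 1| * y ^ (β - 1 - 1)) :=
            mul_le_mul_of_nonneg_right (hU0 y)
              (mul_nonneg (abs_nonneg _) (Real.rpow_nonneg hy0.le _))
        _ = |β - 1| * y ^ (β - 1 - 1) := one_mul _
        _ ≤ |β - 1| * G2 :=
            mul_le_mul_of_nonneg_left (hrpow_le (β - 1 - 1) y hy) (abs_nonneg _)
    calc |deriv U y * y ^ (β - 1) + U y * ((β - 1) * y ^ (β - 1 - 1))|
        ≤ |deriv U y * y ^ (β - 1)| + |U y * ((β - 1) * y ^ (β - 1 - 1))| := abs_add_le _ _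
      _ ≤ G + |β - 1| * G2 := add_le_add h1 h2
  have hg'cont : ContinuousOn g' (Set.Icc a b) := by
    intro y hy
    have hy0 : 0 < y := lt_of_lt_of_le ha hy.1
    have c1 : ContinuousAt (fun x : ℝ => x ^ (β - 1)) y :=
      Real.continuousAt_rpow_const y _ (Or.inl hy0.ne')
    have c2 : ContinuousAt (fun x : ℝ => x ^ (β - 1 - 1)) y :=
      Real.continuousAt_rpow_const y _ (Or.inl hy0.ne')
    have cd : ContinuousAt (deriv U) y := (hU.continuous_deriv (by simp)).continuousAt
    have cU : ContinuousAt U y := hU.continuous.continuousAt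
    exact (Complex.continuous_ofReal.continuousAt.comp
      ((cd.mul c1).add (cU.mul (continuousAt_const.mul c2)))).continuousWithinAt
  set F : ℝ → ℂ := fun y => g y * Complex.exp (Complex.I *
      ((τ * Real.log y - 2 * Real.pi * ξ * y : ℝ) : ℂ)) with hFdef
  have hFcont : ContinuousOn F (Set.Icc a b) := by
    intro y hy
    have hy0 : 0 < y := lt_of_lt_of_le ha hy.1
    have hgc : ContinuousAt g y := (hgd y hy0).continuousAt
    have hφc : ContinuousAt (fun y : ℝ => τ * Real.log y - 2 * Real.pi * ξ * y) y :=
      ((Real.continuousAt_log hy0.ne').const_mul τ).sub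
        (continuousAt_id.const_mul (2 * Real.pi * ξ))
    have hEc : ContinuousAt (fun y : ℝ => Complex.exp (Complex.I *
        ((τ * Real.log y - 2 * Real.pi * ξ * y : ℝ) : ℂ))) y :=
      Complex.continuous_exp.continuousAt.comp
        ((Complex.continuous_ofReal.continuousAt.comp hφc).const_mul Complex.I)
    exact (hgc.mul hEc).continuousWithinAt
  have hFint : ∀ c d : ℝ, a ≤ c → c ≤ d → d ≤ b → IntervalIntegrable F volume c d := by
    intro c d h1 h2 h3
    apply ContinuousOn.intervalIntegrable
    rw [Set.uIcc_of_le h2]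
    exact hFcont.mono (Set.Icc_subset_Icc h1 h3)
  -- reduction of Udag to an interval integral
  have hred : Udag U ξ ((β : ℂ) + τ * Complex.I) = ∫ y in a..b, F y := by
    rw [Udag]
    have hind : (fun y : ℝ => (U y : ℂ) * e2pi (-(ξ * y)) * (y : ℂ) ^ ((β:ℂ) + τ * Complex.I - 1))
        = Set.indicator (Set.Icc a b)
          (fun y : ℝ => (U y : ℂ) * e2pi (-(ξ * y)) * (y : ℂ) ^ ((β:ℂ) + τ * Complex.I - 1)) := by
      funext y
      by_cases hy : y ∈ Set.Icc a b
      · rw [Set.indicator_of_mem hy]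
      · rw [Set.indicator_of_notMem hy]
        have hU0' : U y = 0 := by
          by_contra h
          exact hy (hsupp (Function.mem_support.2 h))
        rw [hU0']
        simp
    have hss : Set.Ioi (0:ℝ) ∩ Set.Icc a b = Set.Icc a b :=
      Set.inter_eq_self_of_subset_right (fun y hy => lt_of_lt_of_le ha hy.1)
    rw [hind, MeasureTheory.setIntegral_indicator measurableSet_Icc, hss,
      MeasureTheory.integral_Icc_eq_integral_Ioc, ← intervalIntegral.integral_of_le hab.le]
    apply intervalIntegral.integral_congr
    intro y hy
    rw [Set.uIcc_of_le hab.le] at hy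
    have hy0 : 0 < y := lt_of_lt_of_le ha hy.1
    have hyC : (y : ℂ) ≠ 0 := Complex.ofReal_ne_zero.2 hy0.ne'
    show (U y : ℂ) * e2pi (-(ξ * y)) * (y : ℂ) ^ ((β:ℂ) + τ * Complex.I - 1)
      = ((U y * y ^ (β - 1) : ℝ) : ℂ) * Complex.exp (Complex.I *
        ((τ * Real.log y - 2 * Real.pi * ξ * y : ℝ) : ℂ))
    rw [e2pi, Complex.cpow_def_of_ne_zero hyC, ← Complex.ofReal_log hy0.le]
    rw [mul_assoc ((U y : ℂ)) _ _]
    rw [Complex.ofReal_mul, mul_assoc ((U y : ℂ)) _ _]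
    congr 1
    rw [Real.rpow_def_of_pos hy0, Complex.ofReal_exp, ← Complex.exp_add, ← Complex.exp_add]
    congr 1
    push_cast
    ring
  -- splitting
  obtain ⟨c, d, hac, hcd, hdb, hlen, hleft, hright⟩ := split_lemma ξ τ μ a b ha hab.le hμ hτ
  have hsplit2 : (∫ y in a..b, F y)
      = (∫ y in a..c, F y) + (∫ y in c..d, F y) + (∫ y in d..b, F y) := by
    rw [intervalIntegral.integral_add_adjacent_intervals
        (hFint a c (le_refl a) hac (le_trans hcd hdb)) (hFint c d hac hcd hdb),
      intervalIntegral.integral_add_adjacent_intervals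
        (hFint a d (le_refl a) (le_trans hac hcd) hdb)
        (hFint d b (le_trans hac hcd) hdb (le_refl b))]
  have h1 : ‖∫ y in a..c, F y‖ ≤ K / μ := by
    rcases hleft with h | h
    · rw [h, intervalIntegral.integral_same, norm_zero]
      positivity
    · have hsub : Set.Icc a c ⊆ Set.Icc a b := Set.Icc_subset_Icc (le_refl a) (le_trans hcd hdb)
      have := nonstat ξ τ μ a c ha hac g g' G G₁
        (fun y hy => hgd y (lt_of_lt_of_le ha hy.1)) (hg'cont.mono hsub)
        (fun y hy => hgbd y (hsub hy)) (fun y hy => hg'bd y (hsub hy)) hμ h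
      refine le_trans this ((div_le_div_iff_of_pos_right hμ).2 ?_)
      have hca : c - a ≤ b - a := by
        have := le_trans hcd hdb
        linarith
      have := mul_le_mul_of_nonneg_right hca hG1nn
      rw [hKdef]
      linarith
  have h3 : ‖∫ y in d..b, F y‖ ≤ K / μ := by
    rcases hright with h | h
    · rw [h, intervalIntegral.integral_same, norm_zero]
      positivity
    · have hd0 : 0 < d := lt_of_lt_of_le ha (le_trans hac hcd)
      have hsub : Set.Icc d b ⊆ Set.Icc a b := Set.Icc_subset_Icc (le_trans hac hcd) (le_refl b)
      have := nonstat ξ τ μ d b hd0 hdb g g' G G₁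
        (fun y hy => hgd y (lt_of_lt_of_le hd0 hy.1)) (hg'cont.mono hsub)
        (fun y hy => hgbd y (hsub hy)) (fun y hy => hg'bd y (hsub hy)) hμ h
      refine le_trans this ((div_le_div_iff_of_pos_right hμ).2 ?_)
      have hca : b - d ≤ b - a := by
        have := le_trans hac hcd
        linarith
      have := mul_le_mul_of_nonneg_right hca hG1nn
      rw [hKdef]
      linarith
  have h2 : ‖∫ y in c..d, F y‖ ≤ G * (d - c) := by
    have hbd : ∀ x ∈ Set.Ioc (min c d) (max c d), ‖F x‖ ≤ G := by
      intro x hx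
      rw [min_eq_left hcd, max_eq_right hcd] at hx
      have hxm : x ∈ Set.Icc a b := ⟨le_trans hac hx.1.le, le_trans hx.2 hdb⟩
      rw [hFdef]
      simp only
      rw [norm_mul]
      have he : ‖Complex.exp (Complex.I *
          ((τ * Real.log x - 2 * Real.pi * ξ * x : ℝ) : ℂ))‖ = 1 := by
        simp [Complex.norm_exp]
      rw [he, mul_one]
      exact hgbd x hxm
    have := intervalIntegral.norm_integral_le_of_norm_le_const hbd
    rwa [_root_.abs_of_nonneg (by linarith : (0:ℝ) ≤ d - c)] at this
  -- final numeric assembly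
  have hnorm : ‖Udag U ξ ((β : ℂ) + τ * Complex.I)‖
      ≤ K / μ + G * (d - c) + K / μ := by
    rw [hred, hsplit2]
    calc ‖(∫ y in a..c, F y) + (∫ y in c..d, F y) + (∫ y in d..b, F y)‖
        ≤ ‖(∫ y in a..c, F y) + (∫ y in c..d, F y)‖ + ‖∫ y in d..b, F y‖ := norm_add_le _ _
      _ ≤ (‖∫ y in a..c, F y‖ + ‖∫ y in c..d, F y‖) + ‖∫ y in d..b, F y‖ :=
          add_le_add_left (norm_add_le _ _) _
      _ ≤ K / μ + G * (d - c) + K / μ := add_le_add (add_le_add h1 h2) h3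
  refine le_trans hnorm ?_
  have hGd : G * (d - c) ≤ G * (2 * μ * b ^ 2 / |τ|) := mul_le_mul_of_nonneg_left hlen hGpos.le
  have hfinal : K / μ + G * (2 * μ * b ^ 2 / |τ|) + K / μ
      = (2 * b * K + 2 * b * G) * |τ| ^ (-(1 : ℝ) / 2) := by
    have hexp : |τ| ^ (-(1 : ℝ) / 2) = t⁻¹ := by
      rw [show (-(1:ℝ) / 2) = -((1:ℝ)/2) by norm_num, Real.rpow_neg hτa.le, htdef]
    rw [hexp, hμdef, ← htt]
    field_simp
    ring
  linarith
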